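/- Let H be a graph with at least one edge, of order k and independence number α(H). Then 2·i*(H) − ∇_{i*(H)}(H) ≤ 2α(H) + 1, and if equality holds then ∇_{α(H)+1}(H) = 1, i.e., H contains a set of α(H)+1 vertices inducing a graph whose every component is an edge or an isolated vertex. -/

import Mathlib

open SimpleGraph

/-- The degree of a vertex, defined without decidability assumptions. -/
noncomputable def gdeg {V : Type*} [Fintype V] (G : SimpleGraph V) (v : V) : ℕ :=
  {w | G.Adj v w}.ncard

/-- The multiset of vertex degrees of a finite simple graph. -/
noncomputable def degMultiset {V : Type*} [Fintype V] (G : SimpleGraph V) : Multiset ℕ :=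
  Finset.univ.val.map (gdeg G)

/-- A finite sequence of naturals is *graphic* if it is the degree sequence of
a finite simple graph (a *realization*). -/
def IsGraphic (π : List ℕ) : Prop :=
  ∃ G : SimpleGraph (Fin π.length), degMultiset G = (π : Multiset ℕ)

/-- `H` is contained in `G` as a (not necessarily induced) subgraph. -/
def ContainsSub {V : Type*} {W : Type*} (H : SimpleGraph V) (G : SimpleGraph W) : Prop :=
  ∃ f : V → W, Function.Injective f ∧ ∀ ⦃a b⦄, H.Adj a b → G.Adj (f a) (f b)

/-- `π` is *potentially `H`-graphic*: some realization of `π` contains `H` as a subgraph. -/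
def PotentiallyGraphic {V : Type*} (H : SimpleGraph V) (π : List ℕ) : Prop :=
  ∃ G : SimpleGraph (Fin π.length), degMultiset G = (π : Multiset ℕ) ∧ ContainsSub H G

/-- The potential number `σ(H,n)`: the minimum even integer such that every
(nonincreasing) graphic sequence of length `n` with sum at least that integer is
potentially `H`-graphic. -/
noncomputable def potentialNumber {V : Type*} (H : SimpleGraph V) (n : ℕ) : ℕ :=
  sInf {s : ℕ | Even s ∧ ∀ π : List ℕ, π.length = n → π.Pairwise (· ≥ ·) →
      IsGraphic π → s ≤ π.sum → PotentiallyGraphic H π}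

/-- The maximum degree `Δ(G)` of a finite graph. -/
noncomputable def maxDeg {V : Type*} [Fintype V] (G : SimpleGraph V) : ℕ :=
  Finset.univ.sup (gdeg G)

/-- The independence number `α(G)`. -/
noncomputable def indepNum' {V : Type*} [Fintype V] (G : SimpleGraph V) : ℕ :=
  sSup {k | ∃ s : Finset V, s.card = k ∧ (s : Set V).Pairwise fun a b => ¬ G.Adj a b}

/-- `∇_i(H)`: the minimum of `Δ(F)` over induced subgraphs `F` of `H` of order `i`. -/
noncomputable def nabla {V : Type*} [Fintype V] (H : SimpleGraph V) (i : ℕ) : ℕ :=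
  sInf {d | ∃ s : Finset V, s.card = i ∧ maxDeg (SimpleGraph.induce (s : Set V) H) = d}

/-- The sequence `π̃_i(H,n) = ((n-1)^{k-i}, (k-i+∇_i(H)-1)^{n-k+i})`, with the last
term reduced by one if the sum would otherwise be odd. -/
noncomputable def tildePi {V : Type*} [Fintype V] (H : SimpleGraph V) (i n : ℕ) : List ℕ :=
  let k := Fintype.card V
  let d := k - i + nabla H i - 1
  let base := List.replicate (k - i) (n - 1) ++ List.replicate (n - k + i) d
  if Even base.sum then base else base.dropLast ++ [d - 1]

/-- `σ̃_i(H) = 2(k-i) + ∇_i(H) - 1`. -/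
noncomputable def sigmaTildeI {V : Type*} [Fintype V] (H : SimpleGraph V) (i : ℕ) : ℕ :=
  2 * (Fintype.card V - i) + nabla H i - 1

/-- `σ̃(H) = max_{α(H)+1 ≤ i ≤ k} σ̃_i(H)`. -/
noncomputable def sigmaTilde {V : Type*} [Fintype V] (H : SimpleGraph V) : ℕ :=
  (Finset.Icc (indepNum' H + 1) (Fintype.card V)).sup (sigmaTildeI H)

/-- The family `P(H,n)` of extremal nonrealizing sequences. -/
noncomputable def potSet {V : Type*} [Fintype V] (H : SimpleGraph V) (n : ℕ) : Set (List ℕ) :=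
  {π | ∃ i ∈ Finset.Icc (indepNum' H + 1) (Fintype.card V),
      sigmaTildeI H i = sigmaTilde H ∧ π = tildePi H i n}

/-- `i*(H)`: the least index `i ∈ {α(H)+1, …, k}` with `σ̃_i(H) = σ̃(H)`. -/
noncomputable def iStar {V : Type*} [Fintype V] (H : SimpleGraph V) : ℕ :=
  sInf {i | i ∈ Finset.Icc (indepNum' H + 1) (Fintype.card V) ∧ sigmaTildeI H i = sigmaTilde H}

/-- `‖π₁ - π₂‖ = Σ_j |x_j - y_j|`, padding the shorter sequence with zeros. -/
def seqDist (π₁ π₂ : List ℕ) : ℕ :=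
  ((List.range (max π₁.length π₂.length)).map fun j =>
    Nat.dist (π₁.getD j 0) (π₂.getD j 0)).sum

/-- `H` is stable with respect to the potential number (σ-stable). -/
def SigmaStable {V : Type*} [Fintype V] (H : SimpleGraph V) : Prop :=
  ∀ ε : ℝ, 0 < ε → ∃ δ : ℝ, 0 < δ ∧ ∃ n₀ : ℕ, ∀ n : ℕ, n₀ ≤ n →
    ∀ π : List ℕ, π.length = n → π.Pairwise (· ≥ ·) → IsGraphic π →
      ¬ PotentiallyGraphic H π →
      (potentialNumber H n : ℝ) - δ * n ≤ (π.sum : ℝ) →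
      ∃ π' ∈ potSet H n, (seqDist π π' : ℝ) < ε * n

/-- The nonincreasing degree sequence of a finite graph. -/
noncomputable def degList {V : Type*} [Fintype V] (G : SimpleGraph V) : List ℕ :=
  ((degMultiset G).sort (· ≤ ·)).reverse

/-- `π` is degree-sufficient for `H`: termwise, `π` dominates the nonincreasing
degree sequence of `H`. -/
def DegreeSufficient {V : Type*} [Fintype V] (H : SimpleGraph V) (π : List ℕ) : Prop :=
  Fintype.card V ≤ π.length ∧ ∀ i < Fintype.card V, (degList H).getD i 0 ≤ π.getD i 0

/-- `H` is weakly σ-stable. -/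
def WeaklySigmaStable {V : Type*} [Fintype V] (H : SimpleGraph V) : Prop :=
  ∀ ε : ℝ, 0 < ε → ∃ δ : ℝ, 0 < δ ∧ ∃ n₀ : ℕ, ∀ n : ℕ, n₀ ≤ n →
    ∀ π : List ℕ, π.length = n → π.Pairwise (· ≥ ·) → IsGraphic π →
      DegreeSufficient H π →
      ¬ PotentiallyGraphic H π →
      (potentialNumber H n : ℝ) - δ * n ≤ (π.sum : ℝ) →
      ∃ π' ∈ potSet H n, (seqDist π π' : ℝ) < ε * n

/-- The join `G ∨ H` of two graphs on disjoint vertex sets. -/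
def graphJoin {V : Type*} {W : Type*} (G : SimpleGraph V) (H : SimpleGraph W) :
    SimpleGraph (V ⊕ W) where
  Adj x y :=
    match x, y with
    | .inl a, .inl b => G.Adj a b
    | .inr a, .inr b => H.Adj a b
    | .inl _, .inr _ => True
    | .inr _, .inl _ => True
  symm := ⟨by
    rintro (a | a) (b | b) h
    · exact G.adj_symm h
    · trivial
    · trivial
    · exact H.adj_symm h⟩
  loopless := ⟨by
    rintro (a | a) h
    · exact G.loopless.irrefl a h
    · exact H.loopless.irrefl a h⟩

/-- The double star `S_{x,y}`: two adjacent centers (vertices `0` and `1`), with the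
first center adjacent to `x` leaves and the second to `y` leaves, so that the centers
have degrees `x+1` and `y+1`. -/
def doubleStar (x y : ℕ) : SimpleGraph (Fin (x + y + 2)) :=
  SimpleGraph.fromRel fun a b =>
    (a.val = 0 ∧ b.val = 1) ∨
    (a.val = 0 ∧ 2 ≤ b.val ∧ b.val < x + 2) ∨
    (a.val = 1 ∧ x + 2 ≤ b.val)

/-- Laying off the term at (0-based) position `i`: delete it and subtract one from
the `d_i` largest remaining terms. -/
def layOffAt (π : List ℕ) (i : ℕ) : List ℕ :=
  let d := π.getD i 0
  let rest := π.take i ++ π.drop (i + 1)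
  (rest.take d).map (· - 1) ++ rest.drop d

/-!
Since `σ̃_i(H) = 2k - 1 - (2i - ∇_i(H))` on `{α+1, …, k}`, the index `i*` minimises `2i - ∇_i`
there, so `2i* - ∇_{i*} ≤ 2(α+1) - ∇_{α+1}`. Any `α+1` vertices span an edge, hence
`∇_{α+1} ≥ 1`, which gives the bound, with equality only if `∇_{α+1} = 1`.
-/

namespace SimpleGraph

variable {V : Type*} [Fintype V] (H : SimpleGraph V)

lemma indepNum'_eq_indepNum : indepNum' H = H.indepNum := by
  simp only [indepNum', indepNum, isNIndepSet_iff, and_comm]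

lemma indepNum_lt_card (hEdge : ∃ u v : V, H.Adj u v) : H.indepNum < Fintype.card V := by
  obtain ⟨u, v, huv⟩ := hEdge
  obtain ⟨s, hs, hcard⟩ := H.exists_isNIndepSet_indepNum
  by_contra! hle
  have huniv : s = Finset.univ := s.eq_univ_of_card (by have := s.card_le_univ; omega)
  exact hs (by simp [huniv]) (by simp [huniv]) huv.ne huv

lemma exists_adj_of_indepNum_lt_card {s : Finset V} (hs : H.indepNum < s.card) :
    ∃ u ∈ s, ∃ v ∈ s, H.Adj u v := by
  by_contra! h
  exact (IsIndepSet.card_le_indepNum fun a ha b hb _ => h a ha b hb).not_gt hs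

lemma one_le_maxDeg_induce {s : Finset V} (hs : H.indepNum < s.card) :
    1 ≤ maxDeg (H.induce (s : Set V)) := by
  obtain ⟨u, hu, v, hv, huv⟩ := H.exists_adj_of_indepNum_lt_card hs
  have hdeg : 1 ≤ gdeg (H.induce (s : Set V)) ⟨u, hu⟩ :=
    (Set.ncard_pos (Set.toFinite _)).mpr ⟨⟨v, hv⟩, huv⟩
  exact hdeg.trans (Finset.le_sup (Finset.mem_univ _))

lemma exists_maxDeg_induce_eq_nabla {i : ℕ} (hi : i ≤ Fintype.card V) :
    ∃ s : Finset V, s.card = i ∧ maxDeg (H.induce (s : Set V)) = nabla H i := by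
  obtain ⟨s, -, hs⟩ := (Finset.univ : Finset V).exists_subset_card_eq (by simpa using hi)
  exact Nat.sInf_mem (s := {d | ∃ s : Finset V, s.card = i ∧ maxDeg (H.induce (s : Set V)) = d})
    ⟨_, s, hs, rfl⟩

lemma one_le_nabla {i : ℕ} (hα : H.indepNum < i) (hi : i ≤ Fintype.card V) :
    1 ≤ nabla H i := by
  obtain ⟨s, rfl, hs⟩ := H.exists_maxDeg_induce_eq_nabla hi
  exact hs ▸ H.one_le_maxDeg_induce hα

lemma natCast_sigmaTildeI {i : ℕ} (hα : H.indepNum < i) (hi : i ≤ Fintype.card V) :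
    (sigmaTildeI H i : ℤ) = 2 * Fintype.card V - 1 - (2 * i - nabla H i) := by
  have := H.one_le_nabla hα hi
  unfold sigmaTildeI
  omega

lemma iStar_mem (h : H.indepNum < Fintype.card V) :
    iStar H ∈ Finset.Icc (H.indepNum + 1) (Fintype.card V) ∧
      sigmaTildeI H (iStar H) = sigmaTilde H := by
  rw [← indepNum'_eq_indepNum] at h ⊢
  obtain ⟨i, hi, hmax⟩ := Finset.exists_mem_eq_sup _ (Finset.nonempty_Icc.mpr h) (sigmaTildeI H)
  exact Nat.sInf_mem (s := {i | _ ∧ _}) ⟨i, hi, hmax.symm⟩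

lemma two_mul_iStar_sub_nabla_le {j : ℕ} (hα : H.indepNum < j) (hj : j ≤ Fintype.card V) :
    2 * (iStar H : ℤ) - nabla H (iStar H) ≤ 2 * j - nabla H j := by
  obtain ⟨hmem, hmax⟩ := H.iStar_mem (hα.trans_le hj)
  rw [Finset.mem_Icc] at hmem
  have hle : sigmaTildeI H j ≤ sigmaTildeI H (iStar H) := by
    rw [hmax, sigmaTilde, indepNum'_eq_indepNum]
    exact Finset.le_sup (Finset.mem_Icc.mpr ⟨hα, hj⟩)
  have := H.natCast_sigmaTildeI hα hj
  have := H.natCast_sigmaTildeI hmem.1 hmem.2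
  omega

end SimpleGraph

/-- For every graph `H` with at least one edge, `2·i*(H) − ∇_{i*(H)}(H) ≤ 2α(H) + 1`, and
in case of equality `∇_{α(H)+1}(H) = 1`, i.e. `H` has a set of `α(H)+1` vertices inducing
a graph of maximum degree exactly `1` (every component an edge or an isolated vertex). -/
theorem typeDichotomy {V : Type} [Fintype V] (H : SimpleGraph V)
    (hEdge : ∃ u v : V, H.Adj u v) :
    (2 * (iStar H : ℤ) - (nabla H (iStar H) : ℤ) ≤ 2 * (indepNum' H : ℤ) + 1) ∧
    (2 * (iStar H : ℤ) - (nabla H (iStar H) : ℤ) = 2 * (indepNum' H : ℤ) + 1 →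
      nabla H (indepNum' H + 1) = 1 ∧
      ∃ s : Finset V, s.card = indepNum' H + 1 ∧
        maxDeg (SimpleGraph.induce (s : Set V) H) = 1) := by
  rw [indepNum'_eq_indepNum]
  have hα := H.indepNum_lt_card hEdge
  have hmin := H.two_mul_iStar_sub_nabla_le (lt_add_one _) hα
  have hpos := H.one_le_nabla (lt_add_one _) hα
  refine ⟨by omega, fun heq => ?_⟩
  have hone : nabla H (H.indepNum + 1) = 1 := by omega
  obtain ⟨s, hcard, hs⟩ := H.exists_maxDeg_induce_eq_nabla hα
  exact ⟨hone, s, hcard, hs.trans hone⟩
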